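/- If F ∈ L¹(ℝ) ∩ C¹(ℝ) is real-valued, then the function G(y) = (1/12)·Im(k(y)∫_{-∞}^y conj(k)·F + conj(k(y))∫_y^∞ k·F), with k(y) = e^{2iy}(1 + (1/2)sech²(y/√2) + i√2 tanh(y/√2)), is bounded, of class C², and satisfies (-ℒ + 6)G = F, i.e. G'' + G - 3tanh²(y/√2)G + 6G = F. -/

import Mathlib

open MeasureTheory Complex

noncomputable def kJost (y : ℝ) : ℂ :=
  Complex.exp (2 * Complex.I * (y : ℂ))
    * (1 + (1 / 2) * (((Real.cosh (y / Real.sqrt 2))⁻¹ : ℝ) : ℂ) ^ 2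
        + Complex.I * ((Real.sqrt 2 : ℝ) : ℂ) * ((Real.tanh (y / Real.sqrt 2) : ℝ) : ℂ))

/-!
The Jost function solves the homogeneous equation `k'' + q k = 0` with the real potential
`q = 7 - 3 tanh²(y/√2)`: since `sech² = 1 - tanh²`, `k(y) = e^{2iy} μ(tanh(y/√2))` with
`μ(t) = 3/2 - t²/2 + i√2 t`, and as `tanh(y/√2)` has derivative `(1 - tanh²(y/√2))/√2` the
equation becomes a polynomial identity in `tanh(y/√2)`. Because `q` is real, `k̄` is a second
solution and the Wronskian `k' k̄ - k̄' k` is constant, equal to its value `12i` at `0`.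

This is variation of parameters: for `H = k ∫_{-∞}^y k̄ F + k̄ ∫_y^∞ k F` the terms coming from
differentiating the integrals cancel in `H'`, and in `H''` they leave the Wronskian times `F`, so
`H'' + q H = 12 i F` and `G = Im H / 12` solves `G'' + q G = F`. Boundedness follows from
`|k| ≤ 3` and `F ∈ L¹`.
-/

open Set ComplexConjugate

theorem HasDerivAt.complex_im {f : ℝ → ℂ} {f' : ℂ} {y : ℝ} (h : HasDerivAt f f' y) :
    HasDerivAt (fun t => (f t).im) f'.im y :=
  Complex.imCLM.hasFDerivAt.comp_hasDerivAt y h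

section SetIntegral

variable {E : Type*} [NormedAddCommGroup E] [NormedSpace ℝ E] [CompleteSpace E]
  {g : ℝ → E}

theorem hasDerivAt_setIntegral_Iic (hg : Integrable g) (hgc : Continuous g) (y : ℝ) :
    HasDerivAt (fun t => ∫ w in Iic t, g w) (g y) y := by
  have hsplit : (fun t => ∫ w in Iic t, g w)
      = fun t => (∫ w in Iic 0, g w) + ∫ w in (0 : ℝ)..t, g w := by
    funext t
    rw [← intervalIntegral.integral_Iic_sub_Iic hg.integrableOn hg.integrableOn]
    abel
  rw [hsplit]
  exact (hgc.integral_hasStrictDerivAt 0 y).hasDerivAt.const_add _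

theorem hasDerivAt_setIntegral_Ici (hg : Integrable g) (hgc : Continuous g) (y : ℝ) :
    HasDerivAt (fun t => ∫ w in Ici t, g w) (-g y) y := by
  have hsplit : (fun t => ∫ w in Ici t, g w) = fun t => (∫ w, g w) - ∫ w in Iic t, g w := by
    funext t
    rw [← intervalIntegral.integral_Iio_add_Ici hg.integrableOn hg.integrableOn,
      setIntegral_congr_set Iio_ae_eq_Iic]
    abel
  rw [hsplit]
  exact (hasDerivAt_setIntegral_Iic hg hgc y).const_sub _

end SetIntegral

noncomputable def greenLeft (k : ℝ → ℂ) (F : ℝ → ℝ) (y : ℝ) : ℂ :=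
  ∫ w in Iic y, conj (k w) * F w

noncomputable def greenRight (k : ℝ → ℂ) (F : ℝ → ℝ) (y : ℝ) : ℂ :=
  ∫ w in Ici y, k w * F w

section VariationOfParameters

variable {k : ℝ → ℂ} {F : ℝ → ℝ}

theorem integrable_conj_mul_ofReal (hkF : Integrable fun w => k w * F w) (hk : Continuous k)
    (hF : Continuous F) : Integrable fun w => conj (k w) * F w :=
  hkF.congr' (by fun_prop) (ae_of_all _ fun w => by simp)

theorem hasDerivAt_greenLeft (hkF : Integrable fun w => k w * F w) (hk : Continuous k)
    (hF : Continuous F) (y : ℝ) : HasDerivAt (greenLeft k F) (conj (k y) * F y) y :=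
  hasDerivAt_setIntegral_Iic (integrable_conj_mul_ofReal hkF hk hF) (by fun_prop) y

theorem hasDerivAt_greenRight (hkF : Integrable fun w => k w * F w) (hk : Continuous k)
    (hF : Continuous F) (y : ℝ) : HasDerivAt (greenRight k F) (-(k y * F y)) y :=
  hasDerivAt_setIntegral_Ici hkF (by fun_prop) y

theorem hasDerivAt_mul_greenLeft_add_conj_mul_greenRight (hkF : Integrable fun w => k w * F w)
    (hk : Continuous k) (hF : Continuous F) {u : ℝ → ℂ} {u' : ℂ} {y : ℝ}
    (hu : HasDerivAt u u' y) :
    HasDerivAt (fun t => u t * greenLeft k F t + conj (u t) * greenRight k F t)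
      (u' * greenLeft k F y + conj u' * greenRight k F y
        + (u y * conj (k y) - conj (u y) * k y) * F y) y := by
  have hu_conj : HasDerivAt (fun t => conj (u t)) (conj u') y := hu.star
  refine ((hu.mul (hasDerivAt_greenLeft hkF hk hF y)).add
    (hu_conj.mul (hasDerivAt_greenRight hkF hk hF y))).congr_deriv ?_
  ring

theorem norm_greenLeft_le (hkF : Integrable fun w => k w * F w) (y : ℝ) :
    ‖greenLeft k F y‖ ≤ ∫ w, ‖k w * (F w : ℂ)‖ :=
  calc ‖greenLeft k F y‖ ≤ ∫ w in Iic y, ‖conj (k w) * F w‖ :=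
        norm_integral_le_integral_norm _
    _ = ∫ w in Iic y, ‖k w * (F w : ℂ)‖ := by simp
    _ ≤ ∫ w, ‖k w * (F w : ℂ)‖ :=
      setIntegral_le_integral hkF.norm (ae_of_all _ fun _ => norm_nonneg _)

theorem norm_greenRight_le (hkF : Integrable fun w => k w * F w) (y : ℝ) :
    ‖greenRight k F y‖ ≤ ∫ w, ‖k w * (F w : ℂ)‖ :=
  (norm_integral_le_integral_norm _).trans
    (setIntegral_le_integral hkF.norm (ae_of_all _ fun _ => norm_nonneg _))

theorem norm_mul_greenLeft_add_conj_mul_greenRight_le (hkF : Integrable fun w => k w * F w)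
    {C : ℝ} (hC : ∀ y, ‖k y‖ ≤ C) (y : ℝ) :
    ‖k y * greenLeft k F y + conj (k y) * greenRight k F y‖
      ≤ 2 * C * ∫ w, ‖k w * (F w : ℂ)‖ := by
  calc ‖k y * greenLeft k F y + conj (k y) * greenRight k F y‖
      ≤ ‖k y‖ * ‖greenLeft k F y‖ + ‖k y‖ * ‖greenRight k F y‖ := by
        refine (norm_add_le (k y * greenLeft k F y) _).trans_eq ?_
        rw [norm_mul, norm_mul, RCLike.norm_conj]
    _ ≤ C * (∫ w, ‖k w * (F w : ℂ)‖) + C * ∫ w, ‖k w * (F w : ℂ)‖ := by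
        have hC0 : 0 ≤ C := (norm_nonneg _).trans (hC y)
        gcongr
        · exact hC y
        · exact norm_greenLeft_le hkF y
        · exact hC y
        · exact norm_greenRight_le hkF y
    _ = 2 * C * ∫ w, ‖k w * (F w : ℂ)‖ := by ring

theorem wronskian_eq_wronskian_zero {q : ℝ → ℝ} {k' : ℝ → ℂ}
    (hk : ∀ y, HasDerivAt k (k' y) y) (hk' : ∀ y, HasDerivAt k' (-(q y) * k y) y) (y : ℝ) :
    k' y * conj (k y) - conj (k' y) * k y = k' 0 * conj (k 0) - conj (k' 0) * k 0 := by
  have hW : ∀ t, HasDerivAt (fun t => k' t * conj (k t) - conj (k' t) * k t) 0 t := fun t => by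
    refine (((hk' t).mul (hk t).star).sub ((hk' t).star.mul (hk t))).congr_deriv ?_
    simp only [star_mul', star_neg, Complex.star_def, Complex.conj_ofReal]
    ring
  exact is_const_of_deriv_eq_zero (fun t => (hW t).differentiableAt) (fun t => (hW t).deriv) y 0

noncomputable def greenSolution (W : ℝ) (k : ℝ → ℂ) (F : ℝ → ℝ) (y : ℝ) : ℝ :=
  1 / W * (k y * greenLeft k F y + conj (k y) * greenRight k F y).im

variable {q : ℝ → ℝ} {k' : ℝ → ℂ} {W : ℝ}

theorem exists_abs_greenSolution_le (hkF : Integrable fun w => k w * F w) {C : ℝ}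
    (hC : ∀ y, ‖k y‖ ≤ C) : ∃ M, ∀ y, |greenSolution W k F y| ≤ M := by
  refine ⟨|1 / W| * (2 * C * ∫ w, ‖k w * (F w : ℂ)‖), fun y => ?_⟩
  rw [greenSolution, abs_mul]
  gcongr
  exact (abs_im_le_norm _).trans (norm_mul_greenLeft_add_conj_mul_greenRight_le hkF hC y)

theorem hasDerivAt_greenSolution (hkF : Integrable fun w => k w * F w)
    (hF : Continuous F) (hk : ∀ y, HasDerivAt k (k' y) y) (y : ℝ) :
    HasDerivAt (greenSolution W k F)
      (1 / W * (k' y * greenLeft k F y + conj (k' y) * greenRight k F y).im) y := by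
  have hkc : Continuous k := continuous_iff_continuousAt.2 fun t => (hk t).continuousAt
  have h := (hasDerivAt_mul_greenLeft_add_conj_mul_greenRight hkF hkc hF (hk y)).complex_im
  refine (h.const_mul (1 / W)).congr_deriv ?_
  rw [show k y * conj (k y) - conj (k y) * k y = 0 by ring]
  simp

theorem hasDerivAt_deriv_greenSolution (hkF : Integrable fun w => k w * F w)
    (hF : Continuous F) (hk : ∀ y, HasDerivAt k (k' y) y)
    (hk' : ∀ y, HasDerivAt k' (-(q y) * k y) y) (hW0 : W ≠ 0)
    (hW : ∀ y, k' y * conj (k y) - conj (k' y) * k y = W * I) (y : ℝ) :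
    HasDerivAt (fun t => 1 / W * (k' t * greenLeft k F t + conj (k' t) * greenRight k F t).im)
      (-(q y) * greenSolution W k F y + F y) y := by
  have hkc : Continuous k := continuous_iff_continuousAt.2 fun t => (hk t).continuousAt
  have h := ((hasDerivAt_mul_greenLeft_add_conj_mul_greenRight hkF hkc hF (hk' y)).complex_im
    ).const_mul (1 / W)
  refine h.congr_deriv ?_
  have hsplit : -(q y : ℂ) * k y * greenLeft k F y + conj (-(q y : ℂ) * k y) * greenRight k F y
      + W * I * F y
      = ((-q y : ℝ) : ℂ) * (k y * greenLeft k F y + conj (k y) * greenRight k F y)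
        + ((W * F y : ℝ) : ℂ) * I := by
    rw [map_mul, map_neg, conj_ofReal]
    push_cast
    ring
  rw [hW, hsplit, add_im, im_ofReal_mul, mul_I_im, ofReal_re, greenSolution]
  field_simp

theorem deriv_greenSolution (hkF : Integrable fun w => k w * F w) (hF : Continuous F)
    (hk : ∀ y, HasDerivAt k (k' y) y) :
    deriv (greenSolution W k F)
      = fun y => 1 / W * (k' y * greenLeft k F y + conj (k' y) * greenRight k F y).im :=
  funext fun y => (hasDerivAt_greenSolution hkF hF hk y).deriv

theorem deriv_deriv_greenSolution (hkF : Integrable fun w => k w * F w) (hF : Continuous F)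
    (hk : ∀ y, HasDerivAt k (k' y) y) (hk' : ∀ y, HasDerivAt k' (-(q y) * k y) y)
    (hW0 : W ≠ 0) (hW : ∀ y, k' y * conj (k y) - conj (k' y) * k y = W * I) (y : ℝ) :
    deriv (deriv (greenSolution W k F)) y = -(q y) * greenSolution W k F y + F y := by
  rw [deriv_greenSolution hkF hF hk]
  exact (hasDerivAt_deriv_greenSolution hkF hF hk hk' hW0 hW y).deriv

theorem contDiff_two_greenSolution (hq : Continuous q) (hkF : Integrable fun w => k w * F w)
    (hF : Continuous F) (hk : ∀ y, HasDerivAt k (k' y) y)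
    (hk' : ∀ y, HasDerivAt k' (-(q y) * k y) y) (hW0 : W ≠ 0)
    (hW : ∀ y, k' y * conj (k y) - conj (k' y) * k y = W * I) :
    ContDiff ℝ 2 (greenSolution W k F) := by
  have hG : Differentiable ℝ (greenSolution W k F) := fun y =>
    (hasDerivAt_greenSolution hkF hF hk y).differentiableAt
  have hG' := hasDerivAt_deriv_greenSolution hkF hF hk hk' hW0 hW
  rw [show (2 : WithTop ℕ∞) = 1 + 1 from rfl, contDiff_succ_iff_deriv,
    deriv_greenSolution hkF hF hk, contDiff_one_iff_deriv, funext fun y => (hG' y).deriv]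
  have hGc := hG.continuous
  exact ⟨hG, by simp, fun y => (hG' y).differentiableAt, by fun_prop⟩

end VariationOfParameters

theorem Real.hasDerivAt_tanh (x : ℝ) : HasDerivAt Real.tanh (1 - Real.tanh x ^ 2) x := by
  have hcosh := (Real.cosh_pos x).ne'
  rw [show Real.tanh = fun x => Real.sinh x / Real.cosh x from
    funext Real.tanh_eq_sinh_div_cosh]
  refine ((Real.hasDerivAt_sinh x).div (Real.hasDerivAt_cosh x) hcosh).congr_deriv ?_
  field_simp

theorem Real.inv_cosh_sq (x : ℝ) : (Real.cosh x)⁻¹ ^ 2 = 1 - Real.tanh x ^ 2 := by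
  have hcosh := (Real.cosh_pos x).ne'
  rw [Real.tanh_eq_sinh_div_cosh]
  field_simp
  linear_combination -Real.cosh_sq x

noncomputable def kink (y : ℝ) : ℝ := Real.tanh (y / √2)

theorem hasDerivAt_kink (y : ℝ) : HasDerivAt kink (√2 / 2 * (1 - kink y ^ 2)) y := by
  refine ((Real.hasDerivAt_tanh _).comp y ((hasDerivAt_id y).div_const √2)).congr_deriv ?_
  have hinv : (√2)⁻¹ = √2 / 2 := by rw [inv_eq_iff_eq_inv, inv_div, Real.div_sqrt]
  rw [one_div, hinv]
  exact mul_comm _ _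

@[fun_prop]
theorem continuous_kink : Continuous kink :=
  continuous_iff_continuousAt.2 fun y => (hasDerivAt_kink y).continuousAt

theorem kink_zero : kink 0 = 0 := by simp [kink]

theorem abs_kink_le_one (y : ℝ) : |kink y| ≤ 1 := (Real.abs_tanh_lt_one _).le

theorem hasDerivAt_exp_mul_comp_kink {p : ℂ → ℂ} {p' : ℂ} {y : ℝ}
    (hp : HasDerivAt p p' (kink y)) :
    HasDerivAt (fun t : ℝ => exp (2 * I * t) * p (kink t))
      (exp (2 * I * y) * (2 * I * p (kink y) + p' * (√2 / 2 * (1 - kink y ^ 2) : ℝ))) y := by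
  have hexp : HasDerivAt (fun t : ℝ => exp (2 * I * t)) (exp (2 * I * y) * (2 * I)) y := by
    simpa only [id_eq, ofReal_one, mul_one] using
      ((hasDerivAt_id y).ofReal_comp.const_mul (2 * I)).cexp
  refine (hexp.mul (hp.comp y (hasDerivAt_kink y).ofReal_comp)).congr_deriv ?_
  simp only [Function.comp_apply]
  ring

noncomputable def kJostProfile (t : ℂ) : ℂ := 3 / 2 - t ^ 2 / 2 + I * √2 * t

noncomputable def kJostDerivProfile (t : ℂ) : ℂ :=
  4 * I - 2 * I * t ^ 2 - 5 * √2 / 2 * t + √2 / 2 * t ^ 3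

noncomputable def kJostDeriv (y : ℝ) : ℂ := exp (2 * I * y) * kJostDerivProfile (kink y)

theorem hasDerivAt_kJostProfile (t : ℂ) : HasDerivAt kJostProfile (-t + I * √2) t := by
  have h := (((hasDerivAt_pow 2 t).div_const 2).const_sub (3 / 2)).add
    ((hasDerivAt_id t).const_mul (I * (√2 : ℂ)))
  exact h.congr_deriv (by simp)

theorem hasDerivAt_kJostDerivProfile (t : ℂ) :
    HasDerivAt kJostDerivProfile (-4 * I * t - 5 * √2 / 2 + 3 * √2 / 2 * t ^ 2) t := by
  have h := ((((hasDerivAt_pow 2 t).const_mul (2 * I)).const_sub (4 * I)).sub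
    ((hasDerivAt_id t).const_mul (5 * (√2 : ℂ) / 2))).add
    ((hasDerivAt_pow 3 t).const_mul ((√2 : ℂ) / 2))
  refine h.congr_deriv ?_
  simp only [Nat.cast_ofNat, Nat.add_one_sub_one, pow_one, mul_one]
  ring

theorem kJost_eq (y : ℝ) : kJost y = exp (2 * I * y) * kJostProfile (kink y) := by
  have hsech : ((Real.cosh (y / √2))⁻¹ : ℂ) ^ 2 = 1 - (kink y : ℂ) ^ 2 := by
    exact_mod_cast Real.inv_cosh_sq (y / √2)
  rw [kJost, kJostProfile, Complex.ofReal_inv, hsech, kink]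
  ring

theorem ofReal_sqrt_two_sq : ((√2 : ℝ) : ℂ) ^ 2 = 2 := by
  rw [← Complex.ofReal_pow, Real.sq_sqrt (by norm_num)]
  norm_num

theorem hasDerivAt_kJost (y : ℝ) : HasDerivAt kJost (kJostDeriv y) y := by
  rw [show kJost = _ from funext kJost_eq]
  refine (hasDerivAt_exp_mul_comp_kink (hasDerivAt_kJostProfile _)).congr_deriv ?_
  simp only [kJostDeriv, kJostDerivProfile, kJostProfile]
  push_cast
  linear_combination (2 * exp (2 * I * y) * √2 * kink y) * I_sq
    + (exp (2 * I * y) * I * (1 - kink y ^ 2) / 2) * ofReal_sqrt_two_sq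

theorem hasDerivAt_kJostDeriv (y : ℝ) :
    HasDerivAt kJostDeriv (-((7 - 3 * kink y ^ 2 : ℝ) : ℂ) * kJost y) y := by
  refine (hasDerivAt_exp_mul_comp_kink (hasDerivAt_kJostDerivProfile _)).congr_deriv ?_
  rw [kJost_eq]
  simp only [kJostDerivProfile, kJostProfile]
  push_cast
  linear_combination (exp (2 * I * y) * (8 - 4 * kink y ^ 2)) * I_sq
    + (exp (2 * I * y) * (-5 + 8 * kink y ^ 2 - 3 * kink y ^ 4) / 4) * ofReal_sqrt_two_sq

theorem wronskian_kJost (y : ℝ) :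
    kJostDeriv y * conj (kJost y) - conj (kJostDeriv y) * kJost y = (12 : ℝ) * I := by
  rw [wronskian_eq_wronskian_zero hasDerivAt_kJost hasDerivAt_kJostDeriv y, kJost_eq, kJostDeriv,
    kJostProfile, kJostDerivProfile, kink_zero]
  simp only [ofReal_zero, mul_zero, exp_zero, one_mul]
  norm_num [map_ofNat, conj_I]
  ring

theorem norm_kJost_le (y : ℝ) : ‖kJost y‖ ≤ 3 := by
  have hprofile : kJostProfile (kink y)
      = ((3 / 2 - kink y ^ 2 / 2 : ℝ) : ℂ) + ((√2 * kink y : ℝ) : ℂ) * I := by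
    simp only [kJostProfile]
    push_cast
    ring
  have hexp : ‖exp (2 * I * y)‖ = 1 := by
    rw [show 2 * I * y = ((2 * y : ℝ) : ℂ) * I by push_cast; ring, norm_exp_ofReal_mul_I]
  have hk := abs_kink_le_one y
  have hsqrt : √2 < 3 / 2 := by
    rw [Real.sqrt_lt' (by norm_num)]; norm_num
  rw [kJost_eq, norm_mul, hexp, one_mul, hprofile]
  calc _ ≤ ‖((3 / 2 - kink y ^ 2 / 2 : ℝ) : ℂ)‖ + ‖((√2 * kink y : ℝ) : ℂ) * I‖ :=
        norm_add_le _ _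
    _ = |3 / 2 - kink y ^ 2 / 2| + √2 * |kink y| := by
        rw [norm_mul, norm_I, mul_one, norm_real, norm_real, Real.norm_eq_abs, Real.norm_eq_abs,
          abs_mul, abs_of_nonneg (Real.sqrt_nonneg 2)]
    _ ≤ 3 := by
        rw [abs_of_nonneg (by nlinarith [abs_le.1 hk])]
        nlinarith [sq_nonneg (kink y), abs_nonneg (kink y), Real.sqrt_nonneg 2]

theorem continuous_kJost : Continuous kJost :=
  continuous_iff_continuousAt.2 fun y => (hasDerivAt_kJost y).continuousAt

theorem integrable_kJost_mul {F : ℝ → ℝ} (hF : Integrable F) :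
    Integrable fun w => kJost w * F w :=
  hF.ofReal.bdd_mul continuous_kJost.aestronglyMeasurable (ae_of_all _ norm_kJost_le)

/-- If F ∈ L¹ ∩ C¹ is real-valued, then
G(y) = (1/12)·Im(k(y)∫_{-∞}^y conj(k)F + conj(k(y))∫_y^∞ kF) is bounded, C², and
satisfies (-ℒ+6)G = F, i.e. G'' + G - 3tanh²(y/√2)G + 6G = F. -/
theorem resolvent_formula (F : ℝ → ℝ)
    (hF1 : Integrable F) (hFC1 : ContDiff ℝ 1 F) :
    (∃ M : ℝ, ∀ y : ℝ,
      |(1 / 12) * (kJost y * (∫ w in Set.Iic y, (starRingEnd ℂ) (kJost w) * (F w : ℂ))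
          + (starRingEnd ℂ) (kJost y) * (∫ w in Set.Ici y, kJost w * (F w : ℂ))).im| ≤ M) ∧
    ContDiff ℝ 2 (fun y : ℝ =>
      (1 / 12) * (kJost y * (∫ w in Set.Iic y, (starRingEnd ℂ) (kJost w) * (F w : ℂ))
          + (starRingEnd ℂ) (kJost y) * (∫ w in Set.Ici y, kJost w * (F w : ℂ))).im) ∧
    ∀ y : ℝ,
      deriv (deriv (fun x : ℝ =>
          (1 / 12) * (kJost x * (∫ w in Set.Iic x, (starRingEnd ℂ) (kJost w) * (F w : ℂ))
              + (starRingEnd ℂ) (kJost x) * (∫ w in Set.Ici x, kJost w * (F w : ℂ))).im)) y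
        + ((1 / 12) * (kJost y * (∫ w in Set.Iic y, (starRingEnd ℂ) (kJost w) * (F w : ℂ))
              + (starRingEnd ℂ) (kJost y) * (∫ w in Set.Ici y, kJost w * (F w : ℂ))).im)
        - 3 * (Real.tanh (y / Real.sqrt 2)) ^ 2
            * ((1 / 12) * (kJost y * (∫ w in Set.Iic y, (starRingEnd ℂ) (kJost w) * (F w : ℂ))
                + (starRingEnd ℂ) (kJost y) * (∫ w in Set.Ici y, kJost w * (F w : ℂ))).im)
        + 6 * ((1 / 12) * (kJost y * (∫ w in Set.Iic y, (starRingEnd ℂ) (kJost w) * (F w : ℂ))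
                + (starRingEnd ℂ) (kJost y) * (∫ w in Set.Ici y, kJost w * (F w : ℂ))).im)
      = F y := by
  set G := greenSolution 12 kJost F
  change (∃ M, ∀ y, |G y| ≤ M) ∧ ContDiff ℝ 2 G ∧
    ∀ y, deriv (deriv G) y + G y - 3 * kink y ^ 2 * G y + 6 * G y = F y
  have hF := hFC1.continuous
  have hkF := integrable_kJost_mul hF1
  have hq : Continuous fun y => 7 - 3 * kink y ^ 2 := by fun_prop
  have hW0 : (12 : ℝ) ≠ 0 := by norm_num
  refine ⟨exists_abs_greenSolution_le hkF norm_kJost_le,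
    contDiff_two_greenSolution hq hkF hF hasDerivAt_kJost hasDerivAt_kJostDeriv hW0
      wronskian_kJost,
    fun y => ?_⟩
  linear_combination deriv_deriv_greenSolution (q := fun y => 7 - 3 * kink y ^ 2) hkF hF
    hasDerivAt_kJost hasDerivAt_kJostDeriv hW0 wronskian_kJost y
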